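/- arXiv:2205.01365 — 2 statements merged into one kernel-verified Lean document; each statement's English description precedes it below -/
import Mathlib

section
/- Let B be a saturated deterministic Büchi automaton, q a state, and w a finite word whose run from q is α-free. Then there exists a finite word w' such that the run on ww' from q is α-free and returns to q, i.e., ww' is an α-free cycle on q. -/
/-- The run of a deterministic automaton from state `q` on infinite word `s`. -/
def dbaRun {C Q : Type} (δ : Q → C → Q) (q : Q) (s : ℕ → C) : ℕ → Q
  | 0 => q
  | n + 1 => δ (dbaRun δ q s n) (s n)

/-- The set of infinite words accepted (Büchi condition on transitions `acc`) from state `q`. -/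
def accFrom {C Q : Type} (δ : Q → C → Q) (acc : Q → C → Prop) (q : Q) : Set (ℕ → C) :=
  {s | ∀ N, ∃ n ≥ N, acc (dbaRun δ q s n) (s n)}

/-- Extension `δ*` of the transition function to finite words. -/
def dstar {C Q : Type} (δ : Q → C → Q) (q : Q) (w : List C) : Q := w.foldl δ q

/-- `Safe(q)`: finite words whose run from `q` takes no Büchi transition. -/
def safeWords {C Q : Type} (δ : Q → C → Q) (acc : Q → C → Prop) (q : Q) : Set (List C) :=
  {w | ∀ (i : ℕ) (h : i < w.length), ¬ acc (dstar δ q (w.take i)) (w.get ⟨i, h⟩)}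

/-- `SafeCycles(q)`: α-free words from `q` that return to `q`. -/
def safeCycles {C Q : Type} (δ : Q → C → Q) (acc : Q → C → Prop) (q : Q) : Set (List C) :=
  {w | w ∈ safeWords δ acc q ∧ dstar δ q w = q}

/-- A DBA is saturated if no strictly larger set of Büchi transitions recognizes the same language. -/
def Saturated {C Q : Type} (δ : Q → C → Q) (acc : Q → C → Prop) (qinit : Q) : Prop :=
  ∀ acc' : Q → C → Prop, (∀ q c, acc q c → acc' q c) → acc' ≠ acc →
    accFrom δ acc' qinit ≠ accFrom δ acc qinit

/-!
Let `(q, c)` be a transition outside `α` taken by an `α`-free word from `q`. Adding `(q, c)` to `α`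
strictly enlarges `α`, so by saturation some infinite word is accepted with the larger condition
but not with `α`: its run takes `(q, c)` infinitely often and, from some point on, no transition
of `α`. The stretch of that run between two late visits of `(q, c)` is an `α`-free path from
`δ q c` back to `q`. Closing off every letter of `w` in this way, from the last to the first,
extends `w` to an `α`-free cycle on `q`.
-/

section Runs

variable {C Q : Type} (δ : Q → C → Q)

lemma dstar_cons (q : Q) (c : C) (w : List C) : dstar δ q (c :: w) = dstar δ (δ q c) w := rfl

lemma dstar_append (q : Q) (u v : List C) : dstar δ q (u ++ v) = dstar δ (dstar δ q u) v :=
  List.foldl_append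

lemma dstar_map_range'_dbaRun (q : Q) (s : ℕ → C) (m n : ℕ) :
    dstar δ (dbaRun δ q s n) ((List.range' n m).map s) = dbaRun δ q s (n + m) := by
  induction m generalizing n with
  | zero => rfl
  | succ m ih =>
    rw [List.range'_succ, List.map_cons, dstar_cons, show n + (m + 1) = n + 1 + m by omega]
    exact ih (n + 1)

variable (acc : Q → C → Prop)

lemma nil_mem_safeWords (q : Q) : ([] : List C) ∈ safeWords δ acc q :=
  fun _ hi => absurd hi (Nat.not_lt_zero _)

lemma cons_mem_safeWords_iff (q : Q) (c : C) (w : List C) :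
    c :: w ∈ safeWords δ acc q ↔ ¬ acc q c ∧ w ∈ safeWords δ acc (δ q c) := by
  constructor
  · intro h
    refine ⟨by simpa [dstar] using h 0 (by simp), fun i hi => ?_⟩
    simpa [dstar_cons] using h (i + 1) (by simpa using hi)
  · rintro ⟨hc, hw⟩ (_ | i) hi
    · simpa [dstar] using hc
    · simpa [dstar_cons] using hw i (by simpa using hi)

lemma append_mem_safeWords {q : Q} {u v : List C} (hu : u ∈ safeWords δ acc q)
    (hv : v ∈ safeWords δ acc (dstar δ q u)) : u ++ v ∈ safeWords δ acc q := by
  induction u generalizing q with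
  | nil => exact hv
  | cons c u ih =>
    rw [cons_mem_safeWords_iff] at hu
    rw [List.cons_append, cons_mem_safeWords_iff]
    exact ⟨hu.1, ih hu.2 hv⟩

lemma map_range'_mem_safeWords_dbaRun (q : Q) (s : ℕ → C) (m n : ℕ)
    (hfree : ∀ i, n ≤ i → i < n + m → ¬ acc (dbaRun δ q s i) (s i)) :
    (List.range' n m).map s ∈ safeWords δ acc (dbaRun δ q s n) := by
  induction m generalizing n with
  | zero => exact nil_mem_safeWords δ acc _
  | succ m ih =>
    rw [List.range'_succ, List.map_cons, cons_mem_safeWords_iff]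
    exact ⟨hfree n le_rfl (by omega),
      ih (n + 1) fun i hi₁ hi₂ => hfree i (by omega) (by omega)⟩

end Runs

section Saturation

variable {C Q : Type} {δ : Q → C → Q} {acc : Q → C → Prop} {qinit : Q}

lemma Saturated.exists_eventually_safe_run_taking_frequently (hsat : Saturated δ acc qinit)
    {r : Q} {c : C} (hrc : ¬ acc r c) :
    ∃ (s : ℕ → C) (N : ℕ), (∀ n ≥ N, ¬ acc (dbaRun δ qinit s n) (s n)) ∧
      ∀ M, ∃ n ≥ M, dbaRun δ qinit s n = r ∧ s n = c := by
  classical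
  let acc' : Q → C → Prop := fun r' c' => acc r' c' ∨ (r' = r ∧ c' = c)
  have hne : acc' ≠ acc := fun h => hrc (h ▸ (Or.inr ⟨rfl, rfl⟩ : acc' r c))
  have hsub : accFrom δ acc qinit ⊆ accFrom δ acc' qinit := fun s hs N =>
    (hs N).imp fun _ ⟨hn, ha⟩ => ⟨hn, Or.inl ha⟩
  obtain ⟨s, hs', hs⟩ := Set.exists_of_ssubset
    (hsub.ssubset_of_ne (hsat acc' (fun _ _ => Or.inl) hne).symm)
  simp only [accFrom, Set.mem_ofPred_eq, not_forall, not_exists, not_and] at hs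
  obtain ⟨N, hN⟩ := hs
  refine ⟨s, N, hN, fun M => ?_⟩
  obtain ⟨n, hn, ha⟩ := hs' (max M N)
  exact ⟨n, le_of_max_le_left hn, ha.resolve_left (hN n (le_of_max_le_right hn))⟩

lemma Saturated.exists_safe_path_back (hsat : Saturated δ acc qinit) {r : Q} {c : C}
    (hrc : ¬ acc r c) :
    ∃ u : List C, u ∈ safeWords δ acc (δ r c) ∧ dstar δ (δ r c) u = r := by
  obtain ⟨s, N, hfree, hfreq⟩ := hsat.exists_eventually_safe_run_taking_frequently hrc
  obtain ⟨n₁, hn₁, hr₁, hc₁⟩ := hfreq N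
  obtain ⟨n₂, hn₂, hr₂, -⟩ := hfreq (n₁ + 1)
  have hstart : dbaRun δ qinit s (n₁ + 1) = δ r c := by
    rw [dbaRun, hr₁, hc₁]
  refine ⟨(List.range' (n₁ + 1) (n₂ - (n₁ + 1))).map s, ?_, ?_⟩
  · rw [← hstart]
    exact map_range'_mem_safeWords_dbaRun δ acc qinit s _ _
      fun i hi _ => hfree i (by omega)
  · rw [← hstart, dstar_map_range'_dbaRun, Nat.add_sub_cancel' hn₂, hr₂]

end Saturation

theorem stmt5_general {C Q : Type} (qinit : Q) (δ : Q → C → Q) (acc : Q → C → Prop)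
    (hsat : Saturated δ acc qinit)
    (q : Q) (w : List C) (hw : w ∈ safeWords δ acc q) :
    ∃ w' : List C, (w ++ w') ∈ safeWords δ acc q ∧ dstar δ q (w ++ w') = q := by
  induction w generalizing q with
  | nil => exact ⟨[], nil_mem_safeWords δ acc q, rfl⟩
  | cons c v ih =>
    rw [cons_mem_safeWords_iff] at hw
    obtain ⟨v', hv'_safe, hv'_cycle⟩ := ih (δ q c) hw.2
    obtain ⟨u, hu_safe, hu_back⟩ := hsat.exists_safe_path_back hw.1
    refine ⟨v' ++ u, ?_, ?_⟩
    · rw [List.cons_append, ← List.append_assoc, cons_mem_safeWords_iff]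
      exact ⟨hw.1, append_mem_safeWords δ acc hv'_safe (by rwa [hv'_cycle])⟩
    · rw [List.cons_append, ← List.append_assoc, dstar_cons, dstar_append, hv'_cycle, hu_back]

/-- in a saturated DBA, every α-free word from `q` extends to an α-free cycle
on `q`. -/
theorem stmt5 {C Q : Type} [Fintype Q] (qinit : Q) (δ : Q → C → Q) (acc : Q → C → Prop)
    (hreach : ∀ q : Q, ∃ w : List C, dstar δ qinit w = q)
    (hsat : Saturated δ acc qinit)
    (q : Q) (w : List C) (hw : w ∈ safeWords δ acc q) :
    ∃ w' : List C, (w ++ w') ∈ safeWords δ acc q ∧ dstar δ q (w ++ w') = q :=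
  stmt5_general qinit δ acc hsat q w hw
end

section
/- In the graph U_{B,θ} constructed from a saturated DBA B built on top of its prefix-classifier and an ordinal θ, every finite path (q₀, λ₀) →^{c₁} ⋯ →^{c_n} (q_n, λ_n) satisfies q_n ≼ δ*(q₀, c₁⋯c_n): the automaton-state component of any path underapproximates the actual run of the automaton with respect to the prefix preorder. -/
/-- Concatenate a finite word in front of an infinite word. -/
def extWord {C : Type} (w : List C) (s : ℕ → C) : ℕ → C :=
  fun n => if h : n < w.length then w.get ⟨n, h⟩ else s (n - w.length)

/-- Winning continuations `w⁻¹W` of a finite word `w` w.r.t. objective `W`. -/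
def winCont {C : Type} (W : Set (ℕ → C)) (w : List C) : Set (ℕ → C) :=
  {s | extWord w s ∈ W}

/-- The edge relation of the universal graph `U_{B,θ}` (restricted to non-top vertices
`(q, λ)` with `λ < θ`): a `c`-colored edge from `(q, λ)` goes to `(δ(q,c), λ')` with no
constraint if `(q,c)` is a Büchi transition and with `λ' < λ` otherwise, and to any
`(q'', λ'')` with `q'' ≺ δ(q,c)`. -/
def UEdge {C Q : Type} (δ : Q → C → Q) (acc : Q → C → Prop) (θ : Ordinal)
    (v : Q × Ordinal) (c : C) (v' : Q × Ordinal) : Prop :=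
  v.2 < θ ∧ v'.2 < θ ∧
    ((v'.1 = δ v.1 c ∧ (acc v.1 c ∨ v'.2 < v.2)) ∨
      accFrom δ acc v'.1 ⊂ accFrom δ acc (δ v.1 c))


private def consW {C : Type} (c : C) (s : ℕ → C) : ℕ → C
  | 0 => c
  | n + 1 => s n

private lemma dbaRun_cons {C Q : Type} (δ : Q → C → Q) (q : Q) (c : C) (s : ℕ → C) :
    ∀ n, dbaRun δ q (consW c s) (n + 1) = dbaRun δ (δ q c) s n := by
  intro n
  induction n with
  | zero => rfl
  | succ m ih => show δ _ _ = δ _ _; rw [ih]; rfl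

private lemma accFrom_cons {C Q : Type} (δ : Q → C → Q) (acc : Q → C → Prop)
    (q : Q) (c : C) (s : ℕ → C) :
    s ∈ accFrom δ acc (δ q c) ↔ consW c s ∈ accFrom δ acc q := by
  constructor
  · intro h N
    obtain ⟨m, hm, hacc⟩ := h N
    exact ⟨m + 1, by omega, by rw [dbaRun_cons]; exact hacc⟩
  · intro h N
    obtain ⟨m, hm, hacc⟩ := h (N + 1)
    obtain ⟨k, rfl⟩ : ∃ k, m = k + 1 := ⟨m - 1, by omega⟩
    exact ⟨k, by omega, by rw [dbaRun_cons] at hacc; exact hacc⟩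

private lemma accFrom_mono {C Q : Type} (δ : Q → C → Q) (acc : Q → C → Prop)
    {q q' : Q} (h : accFrom δ acc q ⊆ accFrom δ acc q') (c : C) :
    accFrom δ acc (δ q c) ⊆ accFrom δ acc (δ q' c) := by
  intro s hs
  rw [accFrom_cons] at hs ⊢
  exact h hs

/-- along any finite path of `U_{B,θ}`, the state component
underapproximates the actual run of the automaton w.r.t. the prefix preorder. -/
theorem stmt14 {C Q : Type} [Fintype Q] (qinit : Q) (δ : Q → C → Q) (acc : Q → C → Prop)
    (hreach : ∀ q : Q, ∃ w : List C, dstar δ qinit w = q)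
    (hsat : Saturated δ acc qinit)
    (hclass : ∀ q q' : Q, accFrom δ acc q = accFrom δ acc q' → q = q')
    (θ : Ordinal) (n : ℕ) (qs : ℕ → Q) (ls : ℕ → Ordinal) (cs : ℕ → C)
    (hpath : ∀ i < n, UEdge δ acc θ (qs i, ls i) (cs i) (qs (i + 1), ls (i + 1))) :
    accFrom δ acc (qs n) ⊆ accFrom δ acc (dstar δ (qs 0) ((List.range n).map cs)) := by

  induction n with
  | zero => exact fun s hs => hs
  | succ m ih =>
    have ih' := ih (fun i hi => hpath i (by omega))
    have hedge := hpath m (by omega)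
    obtain ⟨-, -, h⟩ := hedge
    have h1 : accFrom δ acc (qs (m + 1)) ⊆ accFrom δ acc (δ (qs m) (cs m)) := by
      rcases h with ⟨heq, -⟩ | hss
      · simp only at heq; rw [heq]
      · exact hss.subset
    have h2 := accFrom_mono δ acc ih' (cs m)
    have hd : dstar δ (qs 0) ((List.range (m + 1)).map cs)
        = δ (dstar δ (qs 0) ((List.range m).map cs)) (cs m) := by
      rw [List.range_succ, List.map_append]; simp [dstar, List.foldl_append]
    rw [hd]
    exact fun s hs => h2 (h1 hs)
end
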